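/- For all integers m, n ≥ 1 and all indices i, j ∈ {0,…,m−1} with j < n, the (i,j) entry of X_n is 0; that is, the first n columns of X_n = (B − 9⁰·1)(B − 9¹·1)⋯(B − 9^{n−1}·1) are trivial. -/
import Mathlib


/-- The m×m matrix B over ℤ₂ with B i i = 9^i, B i (i+1) = 1 and all other entries 0. -/
noncomputable def Bmat (m : ℕ) : Matrix (Fin m) (Fin m) ℤ_[2] := fun i j =>
  if (j : ℕ) = i then 9 ^ (i : ℕ) else if (j : ℕ) = (i : ℕ) + 1 then 1 else 0

/-- X n = (B - 9⁰·1)(B - 9¹·1)⋯(B - 9^{n-1}·1). -/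
noncomputable def Xmat (m n : ℕ) : Matrix (Fin m) (Fin m) ℤ_[2] :=
  ((List.range n).map (fun u => Bmat m - (9 : ℤ_[2]) ^ u • (1 : Matrix (Fin m) (Fin m) ℤ_[2]))).prod

lemma Xmat_succ (m n : ℕ) :
    Xmat m (n + 1) = Xmat m n * (Bmat m - (9 : ℤ_[2]) ^ n • (1 : Matrix (Fin m) (Fin m) ℤ_[2])) := by
  unfold Xmat
  rw [List.range_succ, List.map_append, List.prod_append]
  simp

lemma Xmat_aux (m n : ℕ) (i j : Fin m) (hj : (j : ℕ) < n) : Xmat m n i j = 0 := by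
  induction n generalizing j with
  | zero => omega
  | succ n ih =>
    rw [Xmat_succ, Matrix.mul_apply]
    apply Finset.sum_eq_zero
    intro k _
    rw [Matrix.sub_apply, Matrix.smul_apply, Matrix.one_apply]
    by_cases hkj : (j : ℕ) = (k : ℕ)
    · have hkj' : k = j := Fin.ext hkj.symm
      subst hkj'
      by_cases hjn : (k : ℕ) < n
      · rw [ih k hjn, zero_mul]
      · have hjeqn : (k : ℕ) = n := by omega
        have : Bmat m k k - (9 : ℤ_[2]) ^ n • (if k = k then (1 : ℤ_[2]) else 0) = 0 := by
          simp [Bmat, hjeqn]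
        rw [this, mul_zero]
    · by_cases hk2 : (j : ℕ) = (k : ℕ) + 1
      · have hkn : (k : ℕ) < n := by omega
        rw [ih k hkn, zero_mul]
      · have hkne : k ≠ j := fun h => hkj (by rw [h])
        have : Bmat m k j - (9 : ℤ_[2]) ^ n • (if k = j then (1 : ℤ_[2]) else 0) = 0 := by
          simp [Bmat, hkj, hk2, hkne]
        rw [this, mul_zero]

theorem Xmat_first_columns_zero (m n : ℕ) (hm : 1 ≤ m) (hn : 1 ≤ n)
    (i j : Fin m) (hj : (j : ℕ) < n) : Xmat m n i j = 0 :=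
  Xmat_aux m n i j hj
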